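/- Let x, y be two comparable points in a finite topological space X (i.e., x ≤ y or y ≤ x in the specialization preorder). Then there exists a path from x to y in X, i.e., a continuous map α : [0,1] → X with α(0) = x and α(1) = y. -/

import Mathlib

/-!
If `x ⤳ y`, the step map equal to `x` on `[0, 1)` and to `y` at `1` is continuous, since every
open set containing `y` also contains `x`; reversing it handles `y ⤳ x`.
-/

/-- The specialization preorder: `x ≤ y` iff `x` lies in every open set containing `y`. -/
def specLE {X : Type*} [TopologicalSpace X] (x y : X) : Prop :=
  ∀ U : Set X, IsOpen U → y ∈ U → x ∈ U

theorem specLE_iff_specializes {X : Type*} [TopologicalSpace X] {x y : X} :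
    specLE x y ↔ x ⤳ y :=
  specializes_iff_forall_open.symm

theorem Specializes.joined {X : Type*} [TopologicalSpace X] {x y : X} (h : x ⤳ y) :
    Joined x y :=
  (h.joinedIn (Set.mem_univ x) (Set.mem_univ y)).joined

theorem path_of_comparable_general {X : Type*} [TopologicalSpace X] (x y : X)
    (h : specLE x y ∨ specLE y x) :
    ∃ α : unitInterval → X, Continuous α ∧ α 0 = x ∧ α 1 = y := by
  obtain ⟨γ⟩ : Joined x y := by
    rcases h with hxy | hyx
    · exact (specLE_iff_specializes.mp hxy).joined
    · exact (specLE_iff_specializes.mp hyx).joined.symm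
  exact ⟨γ, γ.continuous, γ.source, γ.target⟩

/-- Comparable points in a finite topological space are joined by a path. -/
theorem path_of_comparable {X : Type*} [TopologicalSpace X] [Finite X] (x y : X)
    (h : specLE x y ∨ specLE y x) :
    ∃ α : unitInterval → X, Continuous α ∧ α 0 = x ∧ α 1 = y :=
  path_of_comparable_general x y h
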